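/- For positive definite A and B and t ∈ [0,1], |(A◇_t B)^{1/2} A^{1/2}| = (1-t)A + t|B^{1/2}A^{1/2}|, provided (1-t)A + t|B^{1/2}A^{1/2}| is positive semi-definite (which holds for t ∈ [0,1]). -/

import Mathlib

open Matrix Filter Asymptotics
open scoped ComplexOrder

/-- The PSD square root of a matrix (0 if not PSD). -/
noncomputable def msqrt {n : ℕ} (M : Matrix (Fin n) (Fin n) ℂ) : Matrix (Fin n) (Fin n) ℂ :=
  letI := Classical.propDecidable M.PosSemidef
  if h : M.PosSemidef then
    (h.1.eigenvectorUnitary : Matrix (Fin n) (Fin n) ℂ) *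
      diagonal ((↑) ∘ (Real.sqrt ·) ∘ h.1.eigenvalues) *
      (star h.1.eigenvectorUnitary : Matrix (Fin n) (Fin n) ℂ)
  else 0

/-- `(AB)^{1/2} := A^{1/2} (A^{1/2} B A^{1/2})^{1/2} A^{-1/2}`. -/
noncomputable def sqAB {n : ℕ} (A B : Matrix (Fin n) (Fin n) ℂ) : Matrix (Fin n) (Fin n) ℂ :=
  msqrt A * msqrt (msqrt A * B * msqrt A) * (msqrt A)⁻¹

/-- Bures-Wasserstein geodesic `A ◇_t B`. -/
noncomputable def geo {n : ℕ} (A B : Matrix (Fin n) (Fin n) ℂ) (t : ℝ) : Matrix (Fin n) (Fin n) ℂ :=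
  ((1 - t)^2 : ℝ) • A + (t^2 : ℝ) • B + (t * (1 - t) : ℝ) • (sqAB A B + (sqAB A B)ᴴ)

/-- Bures-Wasserstein distance. -/
noncomputable def dBW {n : ℕ} (A B : Matrix (Fin n) (Fin n) ℂ) : ℝ :=
  Real.sqrt ((Matrix.trace A).re + (Matrix.trace B).re -
    2 * (Matrix.trace (msqrt (msqrt A * B * msqrt A))).re)


/-!
Write `C = A^{1/2}`, `S = (C B C)^{1/2}` and `R = (1-t) A + t S`. Since `C (AB)^{1/2} C = A S`
and `C (BA)^{1/2} C = S A`, conjugating the geodesic by `C` gives `C (A ◇_t B) C = R²`. In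
particular `A ◇_t B` is positive semidefinite, so
`|(A ◇_t B)^{1/2} C|² = C (A ◇_t B) C = R²`, and for `t ∈ [0,1]` the matrix `R` is positive
semidefinite, hence it is the unique positive square root of `R²`.
-/

section MatrixSqrt

open scoped MatrixOrder

variable {n : ℕ} {M R : Matrix (Fin n) (Fin n) ℂ}

lemma msqrt_eq_cfcSqrt (hM : M.PosSemidef) : msqrt M = CFC.sqrt M := by
  rw [CFC.sqrt_eq_real_sqrt M hM.nonneg, cfcₙ_eq_cfc, hM.1.cfc_eq, msqrt, dif_pos hM]
  rfl

lemma posSemidef_msqrt (hM : M.PosSemidef) : (msqrt M).PosSemidef := by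
  rw [msqrt_eq_cfcSqrt hM, ← nonneg_iff_posSemidef]
  exact CFC.sqrt_nonneg M

lemma isHermitian_msqrt (M : Matrix (Fin n) (Fin n) ℂ) : (msqrt M).IsHermitian := by
  by_cases hM : M.PosSemidef
  · exact (posSemidef_msqrt hM).1
  · simp [msqrt, hM]

lemma msqrt_mul_msqrt (hM : M.PosSemidef) : msqrt M * msqrt M = M := by
  rw [msqrt_eq_cfcSqrt hM]
  exact CFC.sqrt_mul_sqrt_self M hM.nonneg

lemma msqrt_eq_of_mul_self_eq (hR : R.PosSemidef) (h : R * R = M) : msqrt M = R := by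
  have hM : M.PosSemidef := by simpa [hR.1.eq, h] using posSemidef_conjTranspose_mul_self R
  rw [msqrt_eq_cfcSqrt hM]
  exact CFC.sqrt_unique h hR.nonneg

lemma isUnit_det_msqrt (hM : M.PosDef) : IsUnit (msqrt M).det := by
  have hdet : IsUnit M.det := hM.det_pos.ne'.isUnit
  rw [← msqrt_mul_msqrt hM.posSemidef, det_mul] at hdet
  exact isUnit_of_mul_isUnit_left hdet

lemma posSemidef_msqrt_mul_mul_msqrt {B : Matrix (Fin n) (Fin n) ℂ} (hB : B.PosSemidef) :
    (msqrt M * B * msqrt M).PosSemidef := by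
  simpa [(isHermitian_msqrt M).eq] using hB.conjTranspose_mul_mul_same (msqrt M)

end MatrixSqrt

section Geodesic

variable {n : ℕ} {A B : Matrix (Fin n) (Fin n) ℂ}

lemma msqrt_mul_sqAB_mul_msqrt (hA : A.PosDef) :
    msqrt A * sqAB A B * msqrt A = A * msqrt (msqrt A * B * msqrt A) := by
  simp only [sqAB, Matrix.mul_assoc, nonsing_inv_mul _ (isUnit_det_msqrt hA), Matrix.mul_one]
  rw [← Matrix.mul_assoc, msqrt_mul_msqrt hA.posSemidef]

lemma msqrt_mul_conjTranspose_sqAB_mul_msqrt (hA : A.PosDef) :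
    msqrt A * (sqAB A B)ᴴ * msqrt A = msqrt (msqrt A * B * msqrt A) * A := by
  simpa [conjTranspose_mul, (isHermitian_msqrt _).eq, hA.1.eq, Matrix.mul_assoc] using
    congrArg conjTranspose (msqrt_mul_sqAB_mul_msqrt (B := B) hA)

lemma msqrt_mul_geo_mul_msqrt (hA : A.PosDef) (hB : B.PosSemidef) (t : ℝ) :
    msqrt A * geo A B t * msqrt A =
      ((1 - t) • A + t • msqrt (msqrt A * B * msqrt A)) *
        ((1 - t) • A + t • msqrt (msqrt A * B * msqrt A)) := by
  have hCC : msqrt A * msqrt A = A := msqrt_mul_msqrt hA.posSemidef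
  have hCAC : msqrt A * A * msqrt A = A * A := by
    calc msqrt A * A * msqrt A = msqrt A * (msqrt A * msqrt A) * msqrt A := by rw [hCC]
      _ = (msqrt A * msqrt A) * (msqrt A * msqrt A) := by simp only [Matrix.mul_assoc]
      _ = A * A := by rw [hCC]
  have hCBC : msqrt A * B * msqrt A =
      msqrt (msqrt A * B * msqrt A) * msqrt (msqrt A * B * msqrt A) :=
    (msqrt_mul_msqrt (posSemidef_msqrt_mul_mul_msqrt hB)).symm
  simp only [geo, Matrix.mul_add, Matrix.add_mul, Matrix.mul_smul, Matrix.smul_mul, hCAC,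
    msqrt_mul_sqAB_mul_msqrt hA, msqrt_mul_conjTranspose_sqAB_mul_msqrt hA]
  -- so that rewriting with `hCBC` leaves the argument of `S` alone
  generalize msqrt (msqrt A * B * msqrt A) = S at hCBC ⊢
  rw [hCBC]
  module

lemma posSemidef_geo (hA : A.PosDef) (hB : B.PosSemidef) (t : ℝ) : (geo A B t).PosSemidef := by
  have hC : IsUnit (msqrt A) := (isUnit_iff_isUnit_det _).mpr (isUnit_det_msqrt hA)
  rw [← hC.posSemidef_star_left_conjugate_iff, star_eq_conjTranspose, (isHermitian_msqrt A).eq,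
    msqrt_mul_geo_mul_msqrt hA hB t]
  have hR : ((1 - t) • A + t • msqrt (msqrt A * B * msqrt A)).IsHermitian :=
    ((IsSelfAdjoint.all _).smul hA.1).add ((IsSelfAdjoint.all _).smul (isHermitian_msqrt _))
  simpa [hR.eq] using posSemidef_conjTranspose_mul_self
    ((1 - t) • A + t • msqrt (msqrt A * B * msqrt A))

end Geodesic

theorem stmt4 {n : ℕ} (A B : Matrix (Fin n) (Fin n) ℂ)
    (hA : A.PosDef) (hB : B.PosDef) (t : ℝ) (ht0 : 0 ≤ t) (ht1 : t ≤ 1) :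
    msqrt ((msqrt (geo A B t) * msqrt A)ᴴ * (msqrt (geo A B t) * msqrt A)) =
      (1 - t) • A + t • msqrt (msqrt A * B * msqrt A) := by
  have hG := posSemidef_geo hA hB.posSemidef t
  have hS := posSemidef_msqrt (posSemidef_msqrt_mul_mul_msqrt (M := A) hB.posSemidef)
  have hR : ((1 - t) • A + t • msqrt (msqrt A * B * msqrt A)).PosSemidef :=
    (hA.posSemidef.smul (sub_nonneg.2 ht1)).add (hS.smul ht0)
  calc msqrt ((msqrt (geo A B t) * msqrt A)ᴴ * (msqrt (geo A B t) * msqrt A))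
      = msqrt (msqrt A * geo A B t * msqrt A) := by
        rw [conjTranspose_mul, (isHermitian_msqrt _).eq, (isHermitian_msqrt _).eq]
        simp only [Matrix.mul_assoc]
        rw [← Matrix.mul_assoc (msqrt (geo A B t)), msqrt_mul_msqrt hG, ← Matrix.mul_assoc]
    _ = (1 - t) • A + t • msqrt (msqrt A * B * msqrt A) := by
        rw [msqrt_mul_geo_mul_msqrt hA hB.posSemidef t]
        exact msqrt_eq_of_mul_self_eq hR rfl
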